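/- arXiv:1502.08053 — 3 statements merged into one kernel-verified Lean document; each statement's English description precedes it below -/
import Mathlib

section
/- If the dual residue vanishes, the duality gap is zero: if κ_i = α_i + φ_i′(A_iᵀw) = 0 for every i = 1, …, n, then P(w) = D(α); consequently (by weak duality) w is a primal minimizer and α a dual maximizer. -/
open scoped BigOperators InnerProductSpace

/-- Subgradient inequality for a convex differentiable function on ℝ. -/
lemma subgrad {f : ℝ → ℝ} {f' x : ℝ} (hf : ConvexOn ℝ Set.univ f)
    (hd : HasDerivAt f f' x) (y : ℝ) : f x + f' * (y - x) ≤ f y := by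
  rcases lt_trichotomy x y with h | h | h
  · have := hf.le_slope_of_hasDerivAt (Set.mem_univ x) (Set.mem_univ y) h hd
    rw [slope_def_field] at this
    have hyx : 0 < y - x := by linarith
    rw [le_div_iff₀ hyx] at this
    linarith [this]
  · subst h; simp
  · have := hf.slope_le_of_hasDerivAt (Set.mem_univ y) (Set.mem_univ x) h hd
    rw [slope_def_field] at this
    have hxy : 0 < x - y := by linarith
    rw [div_le_iff₀ hxy] at this
    nlinarith [this]

/-- Fenchel equality at a differentiable point. -/
lemma fenchel_eq {f fs : ℝ → ℝ} {f' x : ℝ} (hf : ConvexOn ℝ Set.univ f)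
    (hd : HasDerivAt f f' x)
    (hlub : IsLUB (Set.range fun y : ℝ => y * f' - f y) (fs f')) :
    fs f' = x * f' - f x := by
  refine le_antisymm ?_ (hlub.1 ⟨x, rfl⟩)
  refine hlub.2 ?_
  rintro _ ⟨y, rfl⟩
  have := subgrad hf hd y
  simp only []
  nlinarith

/-- If the dual residue vanishes (`κᵢ = αᵢ + φᵢ′(Aᵢᵀw) = 0` for all `i`),
then the duality gap is zero: `P(w) = D(α)`; consequently (by weak duality) `w` is a
primal minimizer and `α` a dual maximizer. -/
theorem stmt6 (n d : ℕ) (hn : 1 ≤ n) (hd : 1 ≤ d)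
    (A : Fin n → EuclideanSpace ℝ (Fin d))
    (lam : ℝ) (hlam : 0 < lam)
    (g : EuclideanSpace ℝ (Fin d) → ℝ)
    (φ φ' : Fin n → ℝ → ℝ)
    (hφconv : ∀ i, ConvexOn ℝ Set.univ (φ i))
    (hφdiff : ∀ i x, HasDerivAt (φ i) (φ' i x) x)
    (φs : Fin n → ℝ → ℝ)
    (hφs : ∀ i u, IsLUB (Set.range fun x : ℝ => x * u - φ i x) (φs i u))
    (gs : EuclideanSpace ℝ (Fin d) → ℝ)
    (hgs : ∀ z, IsLUB (Set.range fun s : EuclideanSpace ℝ (Fin d) => ⟪s, z⟫_ℝ - g s) (gs z))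
    (P : EuclideanSpace ℝ (Fin d) → ℝ)
    (hP : ∀ u, P u = (1 / (n : ℝ)) * ∑ i, φ i ⟪A i, u⟫_ℝ + lam * g u)
    (D : (Fin n → ℝ) → ℝ)
    (hD : ∀ β : Fin n → ℝ,
      D β = -lam * gs ((1 / (lam * n)) • (∑ i, β i • A i)) - (1 / (n : ℝ)) * ∑ i, φs i (-β i))
    (α : Fin n → ℝ)
    (abar : EuclideanSpace ℝ (Fin d))
    (habar : abar = (1 / (lam * n)) • (∑ i, α i • A i))
    (w : EuclideanSpace ℝ (Fin d))
    (hattain : g w + gs abar = ⟪w, abar⟫_ℝ)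
    (hκ : ∀ i, α i + φ' i ⟪A i, w⟫_ℝ = 0) :
    P w = D α ∧ (∀ w' : EuclideanSpace ℝ (Fin d), P w ≤ P w') ∧
      (∀ β : Fin n → ℝ, D β ≤ D α) := by
  have hn0 : (n : ℝ) ≠ 0 := by positivity
  have hlamn : lam * (n : ℝ) ≠ 0 := by positivity
  -- key inner product computation
  have key : ∀ (u : EuclideanSpace ℝ (Fin d)) (β : Fin n → ℝ),
      lam * ⟪u, (1 / (lam * n)) • (∑ i, β i • A i)⟫_ℝ
        = (1 / (n : ℝ)) * ∑ i, β i * ⟪A i, u⟫_ℝ := by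
    intro u β
    rw [real_inner_smul_right, inner_sum]
    simp_rw [real_inner_smul_right]
    rw [show ∑ i, β i * ⟪u, A i⟫_ℝ = ∑ i, β i * ⟪A i, u⟫_ℝ by
      exact Finset.sum_congr rfl fun i _ => by rw [real_inner_comm]]
    field_simp
  -- Fenchel equality for each i at w
  have hfen : ∀ i, φs i (-α i) = ⟪A i, w⟫_ℝ * (-α i) - φ i ⟪A i, w⟫_ℝ := by
    intro i
    have hαi : -α i = φ' i ⟪A i, w⟫_ℝ := by linarith [hκ i]
    rw [hαi]
    exact fenchel_eq (hφconv i) (hφdiff i _) (by rw [← hαi]; exact hφs i (-α i))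
  -- equality of P w and D α
  have heq : P w = D α := by
    rw [hP, hD, ← habar]
    have h1 : lam * (g w) + lam * gs abar = lam * ⟪w, abar⟫_ℝ := by
      rw [← mul_add, hattain]
    have h2 : lam * ⟪w, abar⟫_ℝ = (1 / (n : ℝ)) * ∑ i, α i * ⟪A i, w⟫_ℝ := by
      rw [habar]; exact key w α
    have h3 : ∑ i, φs i (-α i) = ∑ i, (⟪A i, w⟫_ℝ * (-α i) - φ i ⟪A i, w⟫_ℝ) :=
      Finset.sum_congr rfl fun i _ => hfen i
    rw [h3]
    rw [Finset.sum_sub_distrib]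
    have h4 : ∑ i, ⟪A i, w⟫_ℝ * (-α i) = -∑ i, α i * ⟪A i, w⟫_ℝ := by
      rw [← Finset.sum_neg_distrib]
      exact Finset.sum_congr rfl fun i _ => by ring
    rw [h4]
    nlinarith [h1, h2]
  -- weak duality
  have hweak : ∀ (β : Fin n → ℝ) (w' : EuclideanSpace ℝ (Fin d)), D β ≤ P w' := by
    intro β w'
    rw [hD, hP]
    set z := (1 / (lam * (n : ℝ))) • (∑ i, β i • A i) with hz
    have hg : ⟪w', z⟫_ℝ - g w' ≤ gs z := (hgs z).1 ⟨w', rfl⟩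
    have hφb : ∀ i, ⟪A i, w'⟫_ℝ * (-β i) - φ i ⟪A i, w'⟫_ℝ ≤ φs i (-β i) :=
      fun i => (hφs i (-β i)).1 ⟨_, rfl⟩
    have hsum : ∑ i, (⟪A i, w'⟫_ℝ * (-β i) - φ i ⟪A i, w'⟫_ℝ) ≤ ∑ i, φs i (-β i) :=
      Finset.sum_le_sum fun i _ => hφb i
    have hk := key w' β
    rw [← hz] at hk
    have hmul1 : (1 / (n : ℝ)) * ∑ i, (⟪A i, w'⟫_ℝ * (-β i) - φ i ⟪A i, w'⟫_ℝ)
        ≤ (1 / (n : ℝ)) * ∑ i, φs i (-β i) := by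
      apply mul_le_mul_of_nonneg_left hsum; positivity
    rw [Finset.sum_sub_distrib] at hmul1
    have h4 : ∑ i, ⟪A i, w'⟫_ℝ * (-β i) = -∑ i, β i * ⟪A i, w'⟫_ℝ := by
      rw [← Finset.sum_neg_distrib]
      exact Finset.sum_congr rfl fun i _ => by ring
    rw [h4] at hmul1
    nlinarith [mul_le_mul_of_nonneg_left hg hlam.le, hk, hmul1]
  exact ⟨heq, fun w' => heq.le.trans (hweak α w'), fun β => (hweak β w).trans heq.le⟩
end

section
/- (Proposition 1 of the paper.) Suppose the set I = {i : κ_i ≠ 0} is nonempty, p is a probability vector with min_{i∈I} p_i > 0, and θ(κ, p) ≤ min_{i∈I} p_i, where θ(κ, p) = nλγ·(∑_{i∈I} κ_i²) / (∑_{i∈I} κ_i²(v_i + nλγ)/p_i). For each i let Δ_i ∈ ℝ maximize Δ ↦ −φ_i*(−(α_i + Δ)) − (A_iᵀw)·Δ − (v_i/(2λn))·Δ². Then ∑_{i=1}^n p_i·(D(α + Δ_i e_i) − D(α)) ≥ θ(κ, p)·(P(w) − D(α)). -/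
/-!
The 1-smoothness of `g*` (descent lemma) bounds the dual increase in coordinate `i` from below by
the one-dimensional objective that `Δᵢ` maximizes. Testing that objective at `-s κᵢ` and using that
`φᵢ*`, the conjugate of a `1/γ`-smooth function, is `γ`-strongly convex, together with the Fenchel
equality `φᵢ*(φᵢ'(x)) = x φᵢ'(x) - φᵢ(x)`, gives an increase of at least
`(s/n) (Gᵢ + κᵢ² (λnγ - s (vᵢ + λnγ)) / (2λn))` for every `s ∈ [0, 1]`, where `Gᵢ` is the `i`-th
term of the duality gap `P(w) - D(α) = (1/n) ∑ Gᵢ`. Taking `s = θ / pᵢ`, weighting by `pᵢ` and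
summing, the second-order terms cancel exactly by the definition of `θ`.
-/

open scoped InnerProductSpace NNReal
open Set

theorem le_add_inner_add_of_lipschitzWith_gradient {E : Type*} [NormedAddCommGroup E]
    [InnerProductSpace ℝ E] [CompleteSpace E] {f : E → ℝ} {f' : E → E} {L : ℝ≥0}
    (hf : ∀ x, HasGradientAt f (f' x) x) (hL : LipschitzWith L f') (x u : E) :
    f (x + u) ≤ f x + ⟪f' x, u⟫_ℝ + L / 2 * ‖u‖ ^ 2 := by
  have hline : ∀ t : ℝ, HasDerivAt (fun t : ℝ => f (x + t • u)) ⟪f' (x + t • u), u⟫_ℝ t := by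
    intro t
    have hcurve : HasDerivAt (fun t : ℝ => x + t • u) u t := by
      simpa using ((hasDerivAt_id t).smul_const u).const_add x
    have h := (hf (x + t • u)).hasFDerivAt.comp_hasDerivAt t hcurve
    rw [InnerProductSpace.toDual_apply_apply] at h
    exact h
  have hquad : ∀ t : ℝ, HasDerivAt (fun t : ℝ => f x + t * ⟪f' x, u⟫_ℝ + L / 2 * ‖u‖ ^ 2 * t ^ 2)
      (⟪f' x, u⟫_ℝ + L * ‖u‖ ^ 2 * t) t := by
    intro t
    refine ((((hasDerivAt_id t).mul_const ⟪f' x, u⟫_ℝ).const_add (f x)).add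
      ((hasDerivAt_pow 2 t).const_mul (L / 2 * ‖u‖ ^ 2))).congr_deriv ?_
    simp only [one_mul, Nat.cast_ofNat]
    ring
  have hslope : ∀ t ∈ Ico (0 : ℝ) 1, ⟪f' (x + t • u), u⟫_ℝ ≤ ⟪f' x, u⟫_ℝ + L * ‖u‖ ^ 2 * t := by
    rintro t ⟨ht, -⟩
    calc ⟪f' (x + t • u), u⟫_ℝ = ⟪f' x, u⟫_ℝ + ⟪f' (x + t • u) - f' x, u⟫_ℝ := by
          rw [inner_sub_left]; ring
      _ ≤ ⟪f' x, u⟫_ℝ + ‖f' (x + t • u) - f' x‖ * ‖u‖ := by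
          gcongr; exact real_inner_le_norm _ _
      _ ≤ ⟪f' x, u⟫_ℝ + L * ‖t • u‖ * ‖u‖ := by
          gcongr
          simpa [dist_eq_norm] using hL.dist_le_mul (x + t • u) x
      _ = ⟪f' x, u⟫_ℝ + L * ‖u‖ ^ 2 * t := by
          rw [norm_smul, Real.norm_of_nonneg ht]; ring
  -- compare `t ↦ f (x + t • u)` on `[0, 1]` with the parabola whose derivative dominates its own
  have := image_le_of_deriv_right_le_deriv_boundary (a := 0) (b := 1)
    (fun t _ => (hline t).continuousAt.continuousWithinAt)
    (fun t _ => (hline t).hasDerivWithinAt) (by simp)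
    (fun t _ => (hquad t).continuousAt.continuousWithinAt)
    (fun t _ => (hquad t).hasDerivWithinAt) hslope (right_mem_Icc.2 zero_le_one)
  simpa using this

theorem le_add_deriv_mul_add_of_lipschitzWith {f f' : ℝ → ℝ} {L : ℝ≥0}
    (hf : ∀ x, HasDerivAt f (f' x) x) (hL : LipschitzWith L f') (x y : ℝ) :
    f y ≤ f x + f' x * (y - x) + L / 2 * (y - x) ^ 2 := by
  simpa [Real.inner_apply, mul_comm] using
    le_add_inner_add_of_lipschitzWith_gradient (fun x => (hf x).hasGradientAt') hL x (y - x)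

section Conjugate

variable {f f' fs : ℝ → ℝ}

theorem ConvexOn.add_deriv_mul_sub_le {S : Set ℝ} (hconv : ConvexOn ℝ S f) {x y : ℝ}
    (hx : x ∈ S) (hy : y ∈ S) (hf : HasDerivAt f (f' x) x) :
    f x + f' x * (y - x) ≤ f y := by
  rcases lt_trichotomy x y with hxy | rfl | hxy
  · have h := hconv.le_slope_of_hasDerivAt hx hy hxy hf
    rw [slope_def_field, le_div_iff₀ (sub_pos.2 hxy)] at h
    linarith
  · simp
  · have h := hconv.slope_le_of_hasDerivAt hy hx hxy hf
    rw [slope_def_field, div_le_iff₀ (sub_pos.2 hxy)] at h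
    linarith

theorem ConvexOn.conj_deriv_eq (hconv : ConvexOn ℝ univ f)
    (hfs : ∀ u, IsLUB (range fun x => x * u - f x) (fs u)) (hf : ∀ x, HasDerivAt f (f' x) x)
    (x : ℝ) :
    fs (f' x) = x * f' x - f x := by
  refine le_antisymm ((hfs _).2 ?_) ((hfs _).1 ⟨x, rfl⟩)
  rintro _ ⟨y, rfl⟩
  have := hconv.add_deriv_mul_sub_le (mem_univ x) (mem_univ y) (hf x)
  dsimp only
  linarith

theorem strongConvexOn_conj_of_le_quadratic (hfs : ∀ u, IsLUB (range fun x => x * u - f x) (fs u))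
    {L : ℝ} (hL : 0 < L) (hsmooth : ∀ x y, f y ≤ f x + f' x * (y - x) + L / 2 * (y - x) ^ 2) :
    StrongConvexOn univ L⁻¹ fs := by
  refine ⟨convex_univ, fun u₁ _ u₂ _ a b ha hb hab => (hfs _).2 ?_⟩
  rintro _ ⟨x, rfl⟩
  -- test the suprema at `x + b t` and `x - a t`, which average to `x` and are `(u₁ - u₂) / L` apart
  obtain ⟨t, rfl⟩ : ∃ t, u₁ = u₂ + L * t := ⟨(u₁ - u₂) / L, by field_simp; ring⟩
  have h₁ : a * ((x + b * t) * (u₂ + L * t) - f (x + b * t)) ≤ a * fs (u₂ + L * t) :=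
    mul_le_mul_of_nonneg_left ((hfs _).1 ⟨_, rfl⟩) ha
  have h₂ : b * ((x - a * t) * u₂ - f (x - a * t)) ≤ b * fs u₂ :=
    mul_le_mul_of_nonneg_left ((hfs u₂).1 ⟨_, rfl⟩) hb
  have s₁ := mul_le_mul_of_nonneg_left (hsmooth x (x + b * t)) ha
  have s₂ := mul_le_mul_of_nonneg_left (hsmooth x (x - a * t)) hb
  have hLt : L⁻¹ * ‖u₂ + L * t - u₂‖ ^ 2 = L * t ^ 2 := by
    rw [add_sub_cancel_left, Real.norm_eq_abs, sq_abs]; field_simp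
  simp only [smul_eq_mul]
  linear_combination h₁ + h₂ + s₁ + s₂ + (a * b / 2) * hLt + (f x + a * b * L * t ^ 2 / 2) * hab

end Conjugate

theorem coordinate_step_gain_ge {ψ : ℝ → ℝ} {γ c a b x Δ s : ℝ} (hψ : StrongConvexOn univ γ ψ)
    (hΔ : ∀ δ, -ψ (-(a + δ)) - x * δ - c * δ ^ 2 ≤ -ψ (-(a + Δ)) - x * Δ - c * Δ ^ 2)
    (hs₀ : 0 ≤ s) (hs₁ : s ≤ 1) :
    s * (ψ (-a) - ψ b + x * (a + b)) + γ / 2 * s * (1 - s) * (a + b) ^ 2 - c * s ^ 2 * (a + b) ^ 2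
      ≤ -ψ (-(a + Δ)) - x * Δ - c * Δ ^ 2 + ψ (-a) := by
  -- the step `-s (a + b)` moves `-a` to the convex combination `(1 - s) (-a) + s b`
  have hconv := hψ.2 (mem_univ (-a)) (mem_univ b) (sub_nonneg.2 hs₁) hs₀ (by ring)
  have hpoint : (1 - s) • -a + s • b = -(a + -(s * (a + b))) := by simp only [smul_eq_mul]; ring
  have hdist : ‖-a - b‖ ^ 2 = (a + b) ^ 2 := by rw [Real.norm_eq_abs, sq_abs]; ring
  dsimp only at hconv
  rw [hpoint, hdist, smul_eq_mul, smul_eq_mul] at hconv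
  linear_combination hconv + hΔ (-(s * (a + b)))

theorem Fintype.sum_apply_update {ι α M : Type*} [Fintype ι] [DecidableEq ι] [AddCommGroup M]
    (F : ι → α → M) (x : ι → α) (i : ι) (c : α) :
    ∑ j, F j (Function.update x i c j) = ∑ j, F j (x j) + (F i c - F i (x i)) := by
  simp only [Function.apply_update F, Finset.sum_update_of_mem (Finset.mem_univ i),
    Finset.sum_eq_add_sum_sdiff_singleton_of_mem (Finset.mem_univ i) fun j => F j (x j)]
  abel

section SDCA

variable {E : Type*} [NormedAddCommGroup E] [InnerProductSpace ℝ E] {n : ℕ}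

noncomputable def sdcaPrimal (A : Fin n → E) (lam : ℝ) (φ : Fin n → ℝ → ℝ) (g : E → ℝ)
    (w : E) : ℝ :=
  (1 / (n : ℝ)) * ∑ i, φ i ⟪A i, w⟫_ℝ + lam * g w

noncomputable def sdcaDual (A : Fin n → E) (lam : ℝ) (gs : E → ℝ) (φs : Fin n → ℝ → ℝ)
    (β : Fin n → ℝ) : ℝ :=
  -lam * gs ((1 / (lam * n)) • ∑ i, β i • A i) - (1 / (n : ℝ)) * ∑ i, φs i (-β i)

theorem sdcaPrimal_sub_sdcaDual {A : Fin n → E} {lam : ℝ} (hlam : lam ≠ 0) {φ φs : Fin n → ℝ → ℝ}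
    {g gs : E → ℝ} {α : Fin n → ℝ} {w : E}
    (hattain : g w + gs ((1 / (lam * n)) • ∑ i, α i • A i) =
      ⟪w, (1 / (lam * n)) • ∑ i, α i • A i⟫_ℝ) :
    sdcaPrimal A lam φ g w - sdcaDual A lam gs φs α =
      (1 / (n : ℝ)) * ∑ i, (φ i ⟪A i, w⟫_ℝ + φs i (-α i) + α i * ⟪A i, w⟫_ℝ) := by
  have hinner : lam * ⟪w, (1 / (lam * n)) • ∑ i, α i • A i⟫_ℝ =
      (1 / (n : ℝ)) * ∑ i, α i * ⟪A i, w⟫_ℝ := by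
    simp only [real_inner_smul_right, inner_sum, real_inner_comm (A _) w]
    rw [← mul_assoc, mul_one_div, div_mul_cancel_left₀ hlam, inv_eq_one_div]
  simp only [sdcaPrimal, sdcaDual, Finset.sum_add_distrib]
  linear_combination lam * hattain + hinner

variable [CompleteSpace E]

theorem sdcaDual_update_sub_ge (A : Fin n → E) {lam : ℝ} (hlam : 0 < lam) (hn : 0 < n)
    {gs : E → ℝ} {gs' : E → E} (hgs : ∀ z, HasGradientAt gs (gs' z) z) (hlip : LipschitzWith 1 gs')
    (φs : Fin n → ℝ → ℝ) (α : Fin n → ℝ) (i : Fin n) (δ : ℝ) :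
    (1 / (n : ℝ)) * (-φs i (-(α i + δ)) - ⟪A i, gs' ((1 / (lam * n)) • ∑ j, α j • A j)⟫_ℝ * δ -
        ‖A i‖ ^ 2 / (2 * lam * n) * δ ^ 2 + φs i (-α i)) ≤
      sdcaDual A lam gs φs (Function.update α i (α i + δ)) - sdcaDual A lam gs φs α := by
  set abar := (1 / (lam * n)) • ∑ j, α j • A j
  set u := (δ / (lam * n)) • A i
  have hshift : (1 / (lam * n)) • ∑ j, Function.update α i (α i + δ) j • A j = abar + u := by
    rw [Fintype.sum_apply_update (fun j (c : ℝ) => c • A j), add_smul, add_sub_cancel_left,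
      smul_add, smul_smul, one_div_mul_eq_div]
  have hdescent := le_add_inner_add_of_lipschitzWith_gradient hgs hlip abar u
  have hu : ⟪gs' abar, u⟫_ℝ = δ / (lam * n) * ⟪A i, gs' abar⟫_ℝ := by
    rw [real_inner_smul_right, real_inner_comm]
  have hu2 : ‖u‖ ^ 2 = (δ / (lam * n)) ^ 2 * ‖A i‖ ^ 2 := by
    rw [norm_smul, mul_pow, Real.norm_eq_abs, sq_abs]
  rw [hu, hu2, NNReal.coe_one] at hdescent
  simp only [sdcaDual, hshift, Fintype.sum_apply_update (fun j c => φs j (-c))]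
  have hscale :
      lam * (δ / (lam * n) * ⟪A i, gs' abar⟫_ℝ + 1 / 2 * ((δ / (lam * n)) ^ 2 * ‖A i‖ ^ 2)) =
        1 / n * (⟪A i, gs' abar⟫_ℝ * δ + ‖A i‖ ^ 2 / (2 * lam * n) * δ ^ 2) := by
    field_simp
  linarith [mul_le_mul_of_nonneg_left hdescent hlam.le, hscale]

theorem sdcaDual_update_gain_ge (A : Fin n → E) {lam : ℝ} (hlam : 0 < lam) (hn : 0 < n)
    {gs : E → ℝ} {gs' : E → E} (hgs : ∀ z, HasGradientAt gs (gs' z) z) (hlip : LipschitzWith 1 gs')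
    {φs : Fin n → ℝ → ℝ} {γ : ℝ} (i : Fin n) (hφs : StrongConvexOn univ γ (φs i)) (α : Fin n → ℝ)
    {w : E} (hw : w = gs' ((1 / (lam * n)) • ∑ j, α j • A j)) {Δ : ℝ}
    (hΔ : ∀ δ, -φs i (-(α i + δ)) - ⟪A i, w⟫_ℝ * δ - ‖A i‖ ^ 2 / (2 * lam * n) * δ ^ 2 ≤
      -φs i (-(α i + Δ)) - ⟪A i, w⟫_ℝ * Δ - ‖A i‖ ^ 2 / (2 * lam * n) * Δ ^ 2)
    (b : ℝ) {s : ℝ} (hs : s ∈ Icc (0 : ℝ) 1) :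
    s * (φs i (-α i) - φs i b + ⟪A i, w⟫_ℝ * (α i + b)) + γ / 2 * s * (1 - s) * (α i + b) ^ 2 -
        ‖A i‖ ^ 2 / (2 * lam * n) * s ^ 2 * (α i + b) ^ 2 ≤
      n * (sdcaDual A lam gs φs (Function.update α i (α i + Δ)) - sdcaDual A lam gs φs α) := by
  have hdual := sdcaDual_update_sub_ge A hlam hn hgs hlip φs α i Δ
  rw [← hw, one_div_mul_eq_div, div_le_iff₀' (Nat.cast_pos.2 hn)] at hdual
  exact (coordinate_step_gain_ge hφs hΔ hs.1 hs.2).trans hdual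

end SDCA

theorem adaptive_coordinate_bound {γ μ θ p κ v G gain : ℝ} (hμ : 0 < μ) (hp : 0 ≤ p) (hθ : 0 ≤ θ)
    (hκp : κ ≠ 0 → 0 < p ∧ θ ≤ p) (hG : κ = 0 → G = 0)
    (hgain : ∀ s ∈ Icc (0 : ℝ) 1,
      s * G + γ / 2 * s * (1 - s) * κ ^ 2 - v / (2 * μ) * s ^ 2 * κ ^ 2 ≤ gain) :
    θ * G + θ / (2 * μ) * (μ * γ * κ ^ 2 - θ * (κ ^ 2 * (v + μ * γ) / p)) ≤ p * gain := by
  rcases eq_or_ne κ 0 with hκ | hκ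
  · have hgain₀ : 0 ≤ gain := by simpa using hgain 0 (left_mem_Icc.2 zero_le_one)
    rw [hκ, hG hκ]
    simpa using mul_nonneg hp hgain₀
  · obtain ⟨hp, hθp⟩ := hκp hκ
    refine (le_of_eq ?_).trans (mul_le_mul_of_nonneg_left
      (hgain (θ / p) ⟨div_nonneg hθ hp.le, (div_le_one hp).2 hθp⟩) hp.le)
    field_simp
    ring

theorem adaptive_sampling_bound {ι : Type*} [Fintype ι] {γ μ θ : ℝ} {p κ v G gain : ι → ℝ}
    (hμ : 0 < μ) (hγ : 0 < γ) (hv : ∀ i, 0 ≤ v i) (hp : ∀ i, 0 ≤ p i)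
    (hcoh : ∀ i, κ i ≠ 0 → 0 < p i)
    (hθ : θ = μ * γ * (∑ i ∈ Finset.univ.filter (fun i => κ i ≠ 0), κ i ^ 2) /
      (∑ i ∈ Finset.univ.filter (fun i => κ i ≠ 0), κ i ^ 2 * (v i + μ * γ) / p i))
    (hθmin : ∀ i, κ i ≠ 0 → θ ≤ p i) (hG : ∀ i, κ i = 0 → G i = 0)
    (hgain : ∀ i, ∀ s ∈ Icc (0 : ℝ) 1,
      s * G i + γ / 2 * s * (1 - s) * κ i ^ 2 - v i / (2 * μ) * s ^ 2 * κ i ^ 2 ≤ gain i) :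
    θ * ∑ i, G i ≤ ∑ i, p i * gain i := by
  rw [Finset.sum_filter_of_ne fun i _ h => by contrapose! h; simp [h],
    Finset.sum_filter_of_ne fun i _ h => by contrapose! h; simp [h]] at hθ
  set Den := ∑ i, κ i ^ 2 * (v i + μ * γ) / p i
  have hμγ := mul_pos hμ hγ
  have hDen : 0 ≤ Den := Finset.sum_nonneg fun i _ =>
    div_nonneg (mul_nonneg (sq_nonneg _) (by linarith [hv i])) (hp i)
  have hθ₀ : 0 ≤ θ := by rw [hθ]; positivity
  -- the adaptive choice of `θ` makes the second-order terms cancel in total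
  have hbalance : θ * (μ * γ * ∑ i, κ i ^ 2 - θ * Den) = 0 := by
    rcases eq_or_ne Den 0 with h | h
    · simp [hθ, h]
    · rw [hθ]; field_simp; ring
  calc θ * ∑ i, G i
      = ∑ i, (θ * G i + θ / (2 * μ) * (μ * γ * κ i ^ 2 - θ * (κ i ^ 2 * (v i + μ * γ) / p i))) := by
        simp only [Finset.sum_add_distrib, ← Finset.mul_sum, Finset.sum_sub_distrib]
        linear_combination -(1 / (2 * μ)) * hbalance
    _ ≤ ∑ i, p i * gain i := Finset.sum_le_sum fun i _ =>
        adaptive_coordinate_bound hμ (hp i) hθ₀ (fun h => ⟨hcoh i h, hθmin i h⟩) (hG i) (hgain i)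

theorem stmt9_general (n d : ℕ) (hn : 1 ≤ n)
    (A : Fin n → EuclideanSpace ℝ (Fin d))
    (v : Fin n → ℝ) (hv : ∀ i, v i = ‖A i‖ ^ 2)
    (lam gam : ℝ) (hlam : 0 < lam) (hgam : 0 < gam)
    (g : EuclideanSpace ℝ (Fin d) → ℝ)
    (φ φ' : Fin n → ℝ → ℝ)
    (hφconv : ∀ i, ConvexOn ℝ Set.univ (φ i))
    (hφdiff : ∀ i x, HasDerivAt (φ i) (φ' i x) x)
    (hφlip : ∀ i, ∀ a b : ℝ, |φ' i a - φ' i b| ≤ (1 / gam) * |a - b|)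
    (φs : Fin n → ℝ → ℝ)
    (hφs : ∀ i u, IsLUB (Set.range fun x : ℝ => x * u - φ i x) (φs i u))
    (gs : EuclideanSpace ℝ (Fin d) → ℝ)
    (gs' : EuclideanSpace ℝ (Fin d) → EuclideanSpace ℝ (Fin d))
    (hgs' : ∀ z, HasGradientAt gs (gs' z) z)
    (hgs'lip : LipschitzWith 1 gs')
    (P : EuclideanSpace ℝ (Fin d) → ℝ)
    (hP : ∀ u, P u = (1 / (n : ℝ)) * ∑ i, φ i ⟪A i, u⟫_ℝ + lam * g u)
    (D : (Fin n → ℝ) → ℝ)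
    (hD : ∀ β : Fin n → ℝ,
      D β = -lam * gs ((1 / (lam * n)) • (∑ i, β i • A i)) - (1 / (n : ℝ)) * ∑ i, φs i (-β i))
    (α : Fin n → ℝ)
    (abar : EuclideanSpace ℝ (Fin d))
    (habar : abar = (1 / (lam * n)) • (∑ i, α i • A i))
    (w : EuclideanSpace ℝ (Fin d)) (hw : w = gs' abar)
    (hattain : g w + gs abar = ⟪w, abar⟫_ℝ)
    (κ : Fin n → ℝ) (hκ : ∀ i, κ i = α i + φ' i ⟪A i, w⟫_ℝ)
    (Δ : Fin n → ℝ)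
    (hΔ : ∀ i, ∀ Δ' : ℝ,
      -φs i (-(α i + Δ')) - ⟪A i, w⟫_ℝ * Δ' - v i / (2 * lam * n) * Δ' ^ 2 ≤
      -φs i (-(α i + Δ i)) - ⟪A i, w⟫_ℝ * (Δ i) - v i / (2 * lam * n) * (Δ i) ^ 2)
    (p : Fin n → ℝ) (hp0 : ∀ i, 0 ≤ p i)
    (hcoh : ∀ i, κ i ≠ 0 → 0 < p i)
    (θval : ℝ)
    (hθval : θval = (n : ℝ) * lam * gam *
        (∑ i ∈ Finset.univ.filter (fun i => κ i ≠ 0), κ i ^ 2) /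
        (∑ i ∈ Finset.univ.filter (fun i => κ i ≠ 0),
          κ i ^ 2 * (v i + n * lam * gam) / p i))
    (hθmin : ∀ i, κ i ≠ 0 → θval ≤ p i) :
    ∑ i, p i * (D (Function.update α i (α i + Δ i)) - D α) ≥ θval * (P w - D α) := by
  have hφsc : ∀ i, StrongConvexOn univ gam (φs i) := fun i => by
    have hlip : LipschitzWith (⟨gam⁻¹, (inv_pos.2 hgam).le⟩ : ℝ≥0) (φ' i) :=
      LipschitzWith.of_dist_le_mul fun a b => (hφlip i a b).trans_eq (by rw [one_div]; rfl)
    simpa using strongConvexOn_conj_of_le_quadratic (hφs i) (inv_pos.2 hgam)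
      (le_add_deriv_mul_add_of_lipschitzWith (hφdiff i) hlip)
  set G := fun i => φ i ⟪A i, w⟫_ℝ + φs i (-α i) + α i * ⟪A i, w⟫_ℝ
  have hgap : P w - D α = (1 / (n : ℝ)) * ∑ i, G i := by
    rw [hP, hD]
    exact sdcaPrimal_sub_sdcaDual hlam.ne' (habar ▸ hattain)
  have hG : ∀ i, G i = φs i (-α i) - φs i (φ' i ⟪A i, w⟫_ℝ) + ⟪A i, w⟫_ℝ * κ i := fun i => by
    rw [(hφconv i).conj_deriv_eq (hφs i) (hφdiff i), hκ]; ring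
  have hG₀ : ∀ i, κ i = 0 → G i = 0 := fun i h => by
    rw [hG, h, show -α i = φ' i ⟪A i, w⟫_ℝ by linarith [hκ i]]; ring
  have hD' : ∀ β, D β = sdcaDual A lam gs φs β := hD
  have hgain : ∀ i, ∀ s ∈ Icc (0 : ℝ) 1,
      s * G i + gam / 2 * s * (1 - s) * κ i ^ 2 - v i / (2 * (n * lam)) * s ^ 2 * κ i ^ 2 ≤
        n * (D (Function.update α i (α i + Δ i)) - D α) := fun i s hs => by
    have h := sdcaDual_update_gain_ge A hlam hn hgs' hgs'lip i (hφsc i) α (habar ▸ hw)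
      (by simpa only [hv] using hΔ i) (φ' i ⟪A i, w⟫_ℝ) hs
    rwa [← hκ, ← hG, ← hv, ← hD', ← hD', show 2 * lam * n = 2 * (n * lam) by ring] at h
  have hsampling := adaptive_sampling_bound (μ := n * lam) (by positivity) hgam
    (fun i => hv i ▸ sq_nonneg _) hp0 hcoh hθval hθmin hG₀ hgain
  rw [ge_iff_le, hgap, mul_left_comm, one_div_mul_eq_div, div_le_iff₀' (Nat.cast_pos.2 hn)]
  simpa only [mul_left_comm (p _), ← Finset.mul_sum] using hsampling

/-- Proposition 1 of the paper: Suppose `I = {i : κᵢ ≠ 0}` is nonempty,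
`p` is a probability vector with `min_{i∈I} pᵢ > 0`, and `θ(κ,p) ≤ min_{i∈I} pᵢ`, where
`θ(κ,p) = nλγ(∑_{i∈I} κᵢ²)/(∑_{i∈I} κᵢ²(vᵢ+nλγ)/pᵢ)`. For each `i` let `Δᵢ` maximize
`Δ ↦ −φᵢ*(−(αᵢ+Δ)) − (Aᵢᵀw)Δ − (vᵢ/(2λn))Δ²`. Then
`∑ᵢ pᵢ(D(α+Δᵢeᵢ) − D(α)) ≥ θ(κ,p)(P(w) − D(α))`. -/
theorem stmt9 (n d : ℕ) (hn : 1 ≤ n) (hd : 1 ≤ d)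
    (A : Fin n → EuclideanSpace ℝ (Fin d))
    (v : Fin n → ℝ) (hv : ∀ i, v i = ‖A i‖ ^ 2)
    (lam gam : ℝ) (hlam : 0 < lam) (hgam : 0 < gam)
    (g : EuclideanSpace ℝ (Fin d) → ℝ)
    (hg : ∀ w₁ w₂ : EuclideanSpace ℝ (Fin d), ∀ a : ℝ, 0 ≤ a → a ≤ 1 →
      g (a • w₁ + (1 - a) • w₂) ≤ a * g w₁ + (1 - a) * g w₂ - a * (1 - a) / 2 * ‖w₁ - w₂‖ ^ 2)
    (φ φ' : Fin n → ℝ → ℝ)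
    (hφconv : ∀ i, ConvexOn ℝ Set.univ (φ i))
    (hφdiff : ∀ i x, HasDerivAt (φ i) (φ' i x) x)
    (hφlip : ∀ i, ∀ a b : ℝ, |φ' i a - φ' i b| ≤ (1 / gam) * |a - b|)
    (φs : Fin n → ℝ → ℝ)
    (hφs : ∀ i u, IsLUB (Set.range fun x : ℝ => x * u - φ i x) (φs i u))
    (gs : EuclideanSpace ℝ (Fin d) → ℝ)
    (hgs : ∀ z, IsLUB (Set.range fun s : EuclideanSpace ℝ (Fin d) => ⟪s, z⟫_ℝ - g s) (gs z))
    (gs' : EuclideanSpace ℝ (Fin d) → EuclideanSpace ℝ (Fin d))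
    (hgs' : ∀ z, HasGradientAt gs (gs' z) z)
    (hgs'lip : LipschitzWith 1 gs')
    (P : EuclideanSpace ℝ (Fin d) → ℝ)
    (hP : ∀ u, P u = (1 / (n : ℝ)) * ∑ i, φ i ⟪A i, u⟫_ℝ + lam * g u)
    (D : (Fin n → ℝ) → ℝ)
    (hD : ∀ β : Fin n → ℝ,
      D β = -lam * gs ((1 / (lam * n)) • (∑ i, β i • A i)) - (1 / (n : ℝ)) * ∑ i, φs i (-β i))
    (α : Fin n → ℝ)
    (abar : EuclideanSpace ℝ (Fin d))
    (habar : abar = (1 / (lam * n)) • (∑ i, α i • A i))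
    (w : EuclideanSpace ℝ (Fin d)) (hw : w = gs' abar)
    (hattain : g w + gs abar = ⟪w, abar⟫_ℝ)
    (κ : Fin n → ℝ) (hκ : ∀ i, κ i = α i + φ' i ⟪A i, w⟫_ℝ)
    (Δ : Fin n → ℝ)
    (hΔ : ∀ i, ∀ Δ' : ℝ,
      -φs i (-(α i + Δ')) - ⟪A i, w⟫_ℝ * Δ' - v i / (2 * lam * n) * Δ' ^ 2 ≤
      -φs i (-(α i + Δ i)) - ⟪A i, w⟫_ℝ * (Δ i) - v i / (2 * lam * n) * (Δ i) ^ 2)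
    (p : Fin n → ℝ) (hp0 : ∀ i, 0 ≤ p i) (hp1 : ∑ i, p i = 1)
    (hcoh : ∀ i, κ i ≠ 0 → 0 < p i)
    (hI : ∃ i, κ i ≠ 0)
    (θval : ℝ)
    (hθval : θval = (n : ℝ) * lam * gam *
        (∑ i ∈ Finset.univ.filter (fun i => κ i ≠ 0), κ i ^ 2) /
        (∑ i ∈ Finset.univ.filter (fun i => κ i ≠ 0),
          κ i ^ 2 * (v i + n * lam * gam) / p i))
    (hθmin : ∀ i, κ i ≠ 0 → θval ≤ p i) :
    ∑ i, p i * (D (Function.update α i (α i + Δ i)) - D α) ≥ θval * (P w - D α) :=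
  stmt9_general n d hn A v hv lam gam hlam hgam g φ φ' hφconv hφdiff hφlip φs hφs gs gs' hgs'
    hgs'lip P hP D hD α abar habar w hw hattain κ hκ Δ hΔ p hp0 hcoh θval hθval hθmin
end

section
/- (Core of Corollary 1.) The optimal value of the adaptive-probability program is at least θ*: for every κ ∈ ℝⁿ with κ ≠ 0, sup{ θ(κ, p) : p ∈ ℝⁿ, p_i ≥ 0, ∑_{i=1}^n p_i = 1, p_i > 0 for all i with κ_i ≠ 0, and θ(κ, p) ≤ min_{i : κ_i ≠ 0} p_i } ≥ θ*, where θ* = nλγ/∑_{j=1}^n(v_j + nλγ). -/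
/-!
Take `p` proportional to the weights `vᵢ + nλγ`, i.e. `pᵢ = (vᵢ + nλγ) / S` with
`S = ∑ⱼ (vⱼ + nλγ)`. Each term of the denominator of `θ(κ, p)` then equals `κᵢ² S`, so
`θ(κ, p) = nλγ / S = θ*` whatever `κ` is, and the constraint `θ* ≤ pᵢ` is just
`nλγ ≤ vᵢ + nλγ`. The feasible values are at most `1`, so the supremum is at least `θ*`.
-/

open Finset

theorem sum_mul_div_div_const {ι : Type*} {s : Finset ι} {c w : ι → ℝ} {S : ℝ}
    (hw : ∀ i ∈ s, w i ≠ 0) (hS : S ≠ 0) :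
    ∑ i ∈ s, c i * w i / (w i / S) = (∑ i ∈ s, c i) * S := by
  rw [sum_mul]
  refine sum_congr rfl fun i hi => ?_
  field_simp [hw i hi]

theorem sum_div_sum_self {ι : Type*} [Fintype ι] {w : ι → ℝ} (h : ∑ j, w j ≠ 0) :
    ∑ i, w i / ∑ j, w j = 1 := by
  rw [← sum_div, div_self h]

theorem le_one_of_le_apply {ι : Type*} [Fintype ι] {q : ι → ℝ} (hq : ∀ i, 0 ≤ q i)
    (hsum : ∑ i, q i = 1) {t : ℝ} {i : ι} (ht : t ≤ q i) : t ≤ 1 :=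
  hsum ▸ ht.trans (single_le_sum (fun j _ => hq j) (mem_univ i))

theorem stmt13_general (n : ℕ)
    (v : Fin n → ℝ) (hv : ∀ i, 0 ≤ v i)
    (lam gam : ℝ) (hlam : 0 < lam) (hgam : 0 < gam)
    (κ : Fin n → ℝ) (hκ : κ ≠ 0)
    (θ : (Fin n → ℝ) → ℝ)
    (hθ : ∀ p : Fin n → ℝ, θ p = (n : ℝ) * lam * gam *
        (∑ i ∈ Finset.univ.filter (fun i => κ i ≠ 0), κ i ^ 2) /
        (∑ i ∈ Finset.univ.filter (fun i => κ i ≠ 0),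
          κ i ^ 2 * (v i + n * lam * gam) / p i))
    (θstar : ℝ) (hθstar : θstar = (n : ℝ) * lam * gam / ∑ j, (v j + n * lam * gam)) :
    sSup {t : ℝ | ∃ p : Fin n → ℝ, (∀ i, 0 ≤ p i) ∧ (∑ i, p i = 1) ∧
        (∀ i, κ i ≠ 0 → 0 < p i) ∧ t = θ p ∧ (∀ i, κ i ≠ 0 → t ≤ p i)} ≥ θstar := by
  obtain ⟨i₀, hi₀⟩ : ∃ i, κ i ≠ 0 := Function.ne_iff.mp hκ
  set w : Fin n → ℝ := fun i => v i + n * lam * gam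
  set S := ∑ j, w j
  have hnlg : 0 < (n : ℝ) * lam * gam := by
    have : (0 : ℝ) < n := Nat.cast_pos.mpr (Fin.pos i₀)
    positivity
  have hw : ∀ i, 0 < w i := fun i => add_pos_of_nonneg_of_pos (hv i) hnlg
  have hS : 0 < S := sum_pos (fun j _ => hw j) ⟨i₀, mem_univ _⟩
  have hK : ∑ i ∈ univ.filter (fun i => κ i ≠ 0), κ i ^ 2 ≠ 0 :=
    (sum_pos (fun i hi => sq_pos_of_ne_zero (mem_filter.mp hi).2) ⟨i₀, by simpa using hi₀⟩).ne'
  have hθp : θ (fun i => w i / S) = θstar := by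
    rw [hθ, sum_mul_div_div_const (fun i _ => (hw i).ne') hS.ne', mul_comm _ S,
      mul_div_mul_right _ _ hK, hθstar]
  refine le_csSup ⟨1, ?bound⟩ ⟨fun i => w i / S, fun i => (div_pos (hw i) hS).le,
    sum_div_sum_self hS.ne', fun i _ => div_pos (hw i) hS, hθp.symm, fun i _ => ?feasible⟩
  case bound =>
    rintro t ⟨q, hq, hsum, -, -, hle⟩
    exact le_one_of_le_apply hq hsum (hle i₀ hi₀)
  case feasible =>
    rw [hθstar]
    exact div_le_div_of_nonneg_right (le_add_of_nonneg_left (hv i)) hS.le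

/-- core of Corollary 1: The optimal value of the adaptive-probability
program is at least `θ*`: for every `κ ∈ ℝⁿ` with `κ ≠ 0`,
`sup{ θ(κ,p) : p ≥ 0, ∑pᵢ = 1, pᵢ > 0 on I, θ(κ,p) ≤ min_{i∈I} pᵢ } ≥ θ*`, where
`θ(κ,p) = nλγ(∑_{i∈I}κᵢ²)/(∑_{i∈I}κᵢ²(vᵢ+nλγ)/pᵢ)`, `I = {i : κᵢ ≠ 0}` and
`θ* = nλγ/∑ⱼ(vⱼ+nλγ)`. -/
theorem stmt13 (n : ℕ) (hn : 1 ≤ n)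
    (v : Fin n → ℝ) (hv : ∀ i, 0 ≤ v i)
    (lam gam : ℝ) (hlam : 0 < lam) (hgam : 0 < gam)
    (κ : Fin n → ℝ) (hκ : κ ≠ 0)
    (θ : (Fin n → ℝ) → ℝ)
    (hθ : ∀ p : Fin n → ℝ, θ p = (n : ℝ) * lam * gam *
        (∑ i ∈ Finset.univ.filter (fun i => κ i ≠ 0), κ i ^ 2) /
        (∑ i ∈ Finset.univ.filter (fun i => κ i ≠ 0),
          κ i ^ 2 * (v i + n * lam * gam) / p i))
    (θstar : ℝ) (hθstar : θstar = (n : ℝ) * lam * gam / ∑ j, (v j + n * lam * gam)) :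
    sSup {t : ℝ | ∃ p : Fin n → ℝ, (∀ i, 0 ≤ p i) ∧ (∑ i, p i = 1) ∧
        (∀ i, κ i ≠ 0 → 0 < p i) ∧ t = θ p ∧ (∀ i, κ i ≠ 0 → t ≤ p i)} ≥ θstar :=
  stmt13_general n v hv lam gam hlam hgam κ hκ θ hθ θstar hθstar
end
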